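/- Fix k ≥ 1 and let p ∈ ℤ with p > k. Then for i ≥ 1: ∂_i(ĉ^{k-p}_p) = ĉ^{k-p+1}_{p-1} if i = p-k ≥ 2; ∂_i(ĉ^{k-p}_p) = 2f_k if i = p-k = 1; and ∂_i(ĉ^{k-p}_p) = 0 if i ≠ p-k. Also ∂_0(ĉ^{k-p}_p) = 2f̃^1_k if p = k+1, and ∂_0(ĉ^{k-p}_p) = 0 if p > k+1. In particular ∂_0(ĉ^{-1}_{k+1}) = 2f̃^1_k, ∂_1(ĉ^{-1}_{k+1}) = 2f_k, and (∂_0 + ∂_1)(ĉ^{-1}_{k+1}) = 2c^1_k. -/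

import Mathlib

/-!
The polynomial ring `R2 = ℚ[c₁, c₂, …, t₁, t₂, …, f_k]`: the variable `Sum.inl p`
(for `p ≥ 1`) is `c_p`, `Sum.inr i` (for `i ≥ 1`) is `t_i`, and `Sum.inl 0` is the
adjoined variable `f_k`.
-/

noncomputable section
open MvPolynomial Finset
open scoped Classical

abbrev R2 : Type := MvPolynomial (ℕ ⊕ ℕ) ℚ

/-- The variable `t_i`. -/
def Tv (i : ℕ) : R2 := X (Sum.inr i)

/-- The adjoined variable `f_k`. -/
def fk : R2 := X (Sum.inl 0)

/-- `c_p`, with the conventions `c_0 = 1` and `c_p = 0` for `p < 0`. -/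
def Cv (p : ℤ) : R2 := if p < 0 then 0 else if p = 0 then 1 else X (Sum.inl p.toNat)

/-- The complete homogeneous symmetric polynomial `h_j` evaluated on a list. -/
def hfun : List R2 → ℕ → R2
  | [], j => if j = 0 then 1 else 0
  | a :: L, j => ∑ i ∈ Finset.range (j + 1), a ^ i * hfun L (j - i)

/-- The elementary symmetric polynomial `e_j` evaluated on a list. -/
def efun : List R2 → ℕ → R2
  | [], j => if j = 0 then 1 else 0
  | _ :: _, 0 => 1
  | a :: L, j + 1 => efun L (j + 1) + a * efun L j

/-- The list `(-t_1, …, -t_r)`. -/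
def negT (r : ℕ) : List R2 := (List.range r).map fun i => -Tv (i + 1)

/-- `h^r_j(-t)`: complete homogeneous for `r ≥ 0`, elementary `e^{-r}_j(-t)` for `r < 0`. -/
def hmt (r : ℤ) (j : ℕ) : R2 :=
  if 0 ≤ r then hfun (negT r.toNat) j else efun (negT (-r).toNat) j

/-- `c^r_p := Σ_{j=0}^p c_{p-j} h^r_j(-t)`. -/
def cc (r p : ℤ) : R2 := ∑ j ∈ Finset.range (p.toNat + 1), Cv (p - j) * hmt r j

/-- `a^s_p := (1/2)c_p + Σ_{j=1}^p c_{p-j} h^s_j(-t)`. -/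
def aa (s p : ℤ) : R2 :=
  C (1/2 : ℚ) * Cv p + ∑ j ∈ Finset.Icc 1 p.toNat, Cv (p - j) * hmt s j

/-- `e^s_s(-t) = (-t_1)⋯(-t_s)`. -/
def eprod (s : ℤ) : R2 := ∏ i ∈ Finset.range s.toNat, -Tv (i + 1)

/-- `ĉ^r_p := c^r_p + (2f_k - c_k)e^{p-k}_{p-k}(-t)` when `r = k - p < 0`, else `c^r_p`. -/
def chat (k : ℕ) (r p : ℤ) : R2 :=
  if r = (k : ℤ) - p ∧ r < 0 then cc r p + (2 * fk - Cv k) * eprod (p - k) else cc r p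

/-- `f̃_k := c_k - f_k`. -/
def ftil (k : ℕ) : R2 := Cv k - fk

/-- `f^s_k := f_k + Σ_{j=1}^k c_{k-j} h^s_j(-t)`. -/
def fks (k : ℕ) (s : ℤ) : R2 := fk + ∑ j ∈ Finset.Icc 1 k, Cv ((k : ℤ) - j) * hmt s j

/-- `f̃^s_k := c_k - 2f_k + f^s_k`. -/
def ftils (k : ℕ) (s : ℤ) : R2 := Cv k - 2 * fk + fks k s

/-- Images of the variables under the automorphism `s_i` (depending on `k` via `s_0(f_k)`). -/
def sImgF (k : ℕ) : ℕ → ℕ ⊕ ℕ → R2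
  | 0, Sum.inr j => if j = 1 then -Tv 2 else if j = 2 then -Tv 1 else Tv j
  | 0, Sum.inl p =>
      if p = 0 then fk - (Tv 1 + Tv 2) * cc 2 ((k : ℤ) - 1)
      else Cv p - 2 * (Tv 1 + Tv 2) *
        ∑ j ∈ Finset.range p, (-1 : R2) ^ j *
          (∑ a ∈ Finset.range (j + 1), Tv 1 ^ a * Tv 2 ^ (j - a)) * Cv ((p : ℤ) - 1 - j)
  | i + 1, Sum.inr j =>
      if j = i + 1 then Tv (i + 2) else if j = i + 2 then Tv (i + 1) else Tv j
  | _ + 1, Sum.inl p => X (Sum.inl p)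

/-- The ring automorphism `s_i` of `R2`. -/
def sA (k i : ℕ) : R2 →ₐ[ℚ] R2 := aeval (sImgF k i)

/-- The fraction field of `R2`. -/
abbrev KK : Type := FractionRing R2

/-- The canonical embedding of `R2` into its fraction field. -/
def toK : R2 →+* KK := algebraMap R2 KK

/-- The denominator `t_1 + t_2` (for `i = 0`) resp. `t_{i+1} - t_i` (for `i ≥ 1`). -/
def dden (i : ℕ) : R2 := if i = 0 then Tv 1 + Tv 2 else Tv (i + 1) - Tv i

/-- The divided difference operator `∂_i`, with values in the fraction field. -/
def dd (k i : ℕ) (f : R2) : KK := (toK f - toK (sA k i f)) / toK (dden i)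

/-!
Write `p = k + n` with `n ≥ 1`. In generating-series form
`ĉ^{-n}_p = [u^p] (Σ_q c_q u^q) · Π_{j ≤ n} (1 - t_j u) + (2f_k - c_k) · (-t_1)⋯(-t_n)`.
For `i ≥ 1`, `s_i` fixes the `c_q` and `f_k` and swaps `t_i`, `t_{i+1}`, so it fixes `ĉ` unless
`i = n`; then only the factor `1 - t_n u` and the factor `-t_n` move, and dividing by
`t_{n+1} - t_n` leaves `ĉ^{1-n}_{p-1}` (for `n = 1`: `c_k + (2f_k - c_k) = 2f_k`).
The automorphism `s_0` multiplies `Σ_q c_q u^q` by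
`(1 - t_1 u)(1 - t_2 u) / ((1 + t_1 u)(1 + t_2 u))` and turns `(1 - t_1 u)(1 - t_2 u)` into
`(1 + t_2 u)(1 + t_1 u)`, while `2f_k - c_k` and `t_1 t_2` are `s_0`-invariant; so `ĉ` is
`s_0`-invariant for `n ≥ 2`, and for `n = 1` the same identity gives
`∂_0 ĉ^{-1}_{k+1} = 2c^1_k - 2f_k = 2f̃^1_k`.
-/

/-- `Σ_p c_p u^p`. -/
def cSeries : PowerSeries R2 := PowerSeries.mk fun n => Cv n

/-- `Π_{j ≤ m} (1 - t_j u) = Σ_j e_j(-t_1, …, -t_m) u^j`. -/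
def elemSeries (m : ℕ) : PowerSeries R2 :=
  ∏ j ∈ range m, (1 - PowerSeries.C (Tv (j + 1)) * PowerSeries.X)

def geomSeries (a : R2) : PowerSeries R2 := PowerSeries.mk fun n => (-a) ^ n

lemma one_add_mul_geomSeries (a : R2) :
    (1 + PowerSeries.C a * PowerSeries.X) * geomSeries a = 1 := by
  refine PowerSeries.ext fun n => ?_
  cases n with
  | zero => simp [geomSeries]
  | succ n =>
    simp [geomSeries, add_mul, mul_assoc, PowerSeries.coeff_one, pow_succ]
    ring

lemma coeff_cSeries_mul_mk (g : ℕ → R2) (p : ℕ) :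
    PowerSeries.coeff p (cSeries * PowerSeries.mk g) =
      ∑ j ∈ range (p + 1), Cv ((p : ℤ) - j) * g j := by
  rw [PowerSeries.coeff_mul, Nat.sum_antidiagonal_eq_sum_range_succ
    (fun a b => PowerSeries.coeff a cSeries * PowerSeries.coeff b (PowerSeries.mk g)),
    ← sum_range_reflect]
  refine sum_congr rfl fun j hj => ?_
  rw [mem_range] at hj
  simp [cSeries, Nat.sub_sub_self (Nat.lt_succ_iff.mp hj), Nat.cast_sub (Nat.lt_succ_iff.mp hj)]

lemma cc_natCast (r : ℤ) (p : ℕ) :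
    cc r p = PowerSeries.coeff p (cSeries * PowerSeries.mk (hmt r)) := by
  rw [coeff_cSeries_mul_mk, cc, Int.toNat_natCast]

lemma mk_efun_cons (a : R2) (L : List R2) :
    PowerSeries.mk (efun (a :: L)) =
      (1 + PowerSeries.C a * PowerSeries.X) * PowerSeries.mk (efun L) := by
  refine PowerSeries.ext fun n => ?_
  cases n with
  | zero => cases L <;> simp [efun]
  | succ n => simp [efun, add_mul, mul_assoc, add_comm]

lemma mk_efun_eq_prod (L : List R2) :
    PowerSeries.mk (efun L) = (L.map fun a => 1 + PowerSeries.C a * PowerSeries.X).prod := by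
  induction L with
  | nil =>
    refine PowerSeries.ext fun n => ?_
    simp [efun, PowerSeries.coeff_one]
  | cons a L ih => rw [mk_efun_cons, ih, List.map_cons, List.prod_cons]

lemma mk_efun_negT (m : ℕ) : PowerSeries.mk (efun (negT m)) = elemSeries m := by
  rw [mk_efun_eq_prod, elemSeries]
  induction m with
  | zero => simp [negT]
  | succ m ih =>
    rw [negT, List.range_succ, List.map_append, List.map_append, List.prod_append, ← negT, ih,
      prod_range_succ]
    simp [sub_eq_add_neg]

lemma mk_hmt_neg (m : ℕ) : PowerSeries.mk (hmt (-m)) = elemSeries m := by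
  rcases Nat.eq_zero_or_pos m with rfl | hm
  · refine PowerSeries.ext fun n => ?_
    simp [hmt, negT, hfun, elemSeries, PowerSeries.coeff_one]
  · rw [← mk_efun_negT]
    congr 1
    funext j
    simp [hmt, hm.ne']

lemma hfun_singleton (a : R2) (j : ℕ) : hfun [a] j = a ^ j := by
  rw [hfun, sum_eq_single j] <;> intros <;> simp_all [hfun]
  omega

lemma hmt_two_eq_hfun (j : ℕ) : hmt 2 j = hfun [-Tv 1, -Tv 2] j := by
  simp [hmt, negT, List.range_succ]

lemma mk_hmt_one : PowerSeries.mk (hmt 1) = geomSeries (Tv 1) := by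
  refine PowerSeries.ext fun n => ?_
  simp [hmt, negT, hfun_singleton, geomSeries]

lemma mk_hmt_two : PowerSeries.mk (hmt 2) = geomSeries (Tv 1) * geomSeries (Tv 2) := by
  refine PowerSeries.ext fun n => ?_
  rw [PowerSeries.coeff_mul, Nat.sum_antidiagonal_eq_sum_range_succ
    (fun a b => PowerSeries.coeff a (geomSeries (Tv 1)) * PowerSeries.coeff b (geomSeries (Tv 2))),
    PowerSeries.coeff_mk, hmt_two_eq_hfun, hfun]
  simp [hfun_singleton, geomSeries]

lemma sA_succ_Tv_succ (k i j : ℕ) :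
    sA k (i + 1) (Tv (j + 1)) = Tv (Equiv.swap i (i + 1) j + 1) := by
  rw [Tv, sA, aeval_X, sImgF, Equiv.swap_apply_def]
  split_ifs <;> first | rfl | omega

lemma sA_succ_fk (k i : ℕ) : sA k (i + 1) fk = fk := by
  rw [fk, sA, aeval_X, sImgF]

lemma sA_succ_Cv (k i : ℕ) (p : ℤ) : sA k (i + 1) (Cv p) = Cv p := by
  unfold Cv
  split_ifs <;> simp [sA, sImgF]

lemma sA_zero_Tv_one (k : ℕ) : sA k 0 (Tv 1) = -Tv 2 := by
  simp [Tv, sA, sImgF]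

lemma sA_zero_Tv_two (k : ℕ) : sA k 0 (Tv 2) = -Tv 1 := by
  simp [Tv, sA, sImgF]

lemma sA_zero_Tv_add_three (k j : ℕ) : sA k 0 (Tv (j + 3)) = Tv (j + 3) := by
  simp [Tv, sA, sImgF]

lemma sA_zero_fk (k : ℕ) : sA k 0 fk = fk - (Tv 1 + Tv 2) * cc 2 ((k : ℤ) - 1) := by
  simp [fk, sA, sImgF]

lemma hmt_two (j : ℕ) :
    hmt 2 j = (-1) ^ j * ∑ a ∈ range (j + 1), Tv 1 ^ a * Tv 2 ^ (j - a) := by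
  rw [hmt_two_eq_hfun, hfun, mul_sum]
  refine sum_congr rfl fun a ha => ?_
  rw [hfun_singleton, neg_pow, neg_pow, ← Nat.add_sub_of_le (mem_range_succ_iff.mp ha), pow_add,
    Nat.add_sub_cancel_left]
  ring

lemma sA_zero_Cv (k q : ℕ) : sA k 0 (Cv q) = Cv q - 2 * (Tv 1 + Tv 2) * cc 2 ((q : ℤ) - 1) := by
  rcases q with _ | q
  · simp [Cv, cc]
  · have hC : Cv ((q + 1 : ℕ) : ℤ) = X (Sum.inl (q + 1)) := by
      rw [Cv, if_neg (by omega), if_neg (by omega)]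
      rfl
    rw [hC, sA, aeval_X, sImgF, if_neg q.succ_ne_zero, ← hC, Nat.cast_succ,
      add_sub_cancel_right, cc_natCast, coeff_cSeries_mul_mk, mul_sum, mul_sum]
    refine congrArg _ (sum_congr rfl fun j _ => ?_)
    rw [hmt_two]
    ring

lemma sA_coeff (k i p : ℕ) (F : PowerSeries R2) :
    sA k i (PowerSeries.coeff p F) = PowerSeries.coeff p (PowerSeries.map (sA k i).toRingHom F) :=
  (PowerSeries.coeff_map _ _ _).symm

lemma map_sA_succ_cSeries (k i : ℕ) :
    PowerSeries.map (sA k (i + 1)).toRingHom cSeries = cSeries :=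
  PowerSeries.ext fun n => by simp [cSeries, sA_succ_Cv]

lemma map_sA_zero_cSeries (k : ℕ) :
    PowerSeries.map (sA k 0).toRingHom cSeries = cSeries -
      PowerSeries.C (2 * (Tv 1 + Tv 2)) * PowerSeries.X * (cSeries * PowerSeries.mk (hmt 2)) := by
  refine PowerSeries.ext fun n => ?_
  rw [PowerSeries.coeff_map, map_sub, mul_assoc, PowerSeries.coeff_C_mul]
  rcases n with _ | n
  · simp [cSeries, Cv]
  · rw [PowerSeries.coeff_succ_X_mul, ← cc_natCast, cSeries, PowerSeries.coeff_mk]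
    change sA k 0 _ = _
    rw [sA_zero_Cv, Nat.cast_succ, add_sub_cancel_right]

lemma map_sA_zero_cSeries_mul (k : ℕ) :
    (1 + PowerSeries.C (Tv 1) * PowerSeries.X) * (1 + PowerSeries.C (Tv 2) * PowerSeries.X) *
        PowerSeries.map (sA k 0).toRingHom cSeries =
      (1 - PowerSeries.C (Tv 1) * PowerSeries.X) * (1 - PowerSeries.C (Tv 2) * PowerSeries.X) *
        cSeries := by
  have h1 := one_add_mul_geomSeries (Tv 1)
  have h2 := one_add_mul_geomSeries (Tv 2)
  rw [map_sA_zero_cSeries, mk_hmt_two, map_mul, map_ofNat, map_add]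
  linear_combination (-(2 * (PowerSeries.C (Tv 1) + PowerSeries.C (Tv 2)) * PowerSeries.X *
    cSeries) * (1 + PowerSeries.C (Tv 2) * PowerSeries.X) * geomSeries (Tv 2)) * h1 +
    (-(2 * (PowerSeries.C (Tv 1) + PowerSeries.C (Tv 2)) * PowerSeries.X * cSeries)) * h2

lemma prod_range_swap {M : Type*} [CommMonoid M] (f : ℕ → M) {i m : ℕ} (h : i + 1 ≠ m) :
    ∏ j ∈ range m, f (Equiv.swap i (i + 1) j) = ∏ j ∈ range m, f j := by
  rcases lt_or_gt_of_ne h with h | h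
  · refine Equiv.Perm.prod_comp _ _ _ fun a ha => ?_
    by_contra hm
    rw [coe_range, Set.mem_Iio, not_lt] at hm
    exact ha (Equiv.swap_apply_of_ne_of_ne (by omega) (by omega))
  · exact prod_congr rfl fun j hj =>
      congrArg f (Equiv.swap_apply_of_ne_of_ne (by simp at hj; omega) (by simp at hj; omega))

lemma map_sA_succ_elemSeries (k : ℕ) {i m : ℕ} (h : i + 1 ≠ m) :
    PowerSeries.map (sA k (i + 1)).toRingHom (elemSeries m) = elemSeries m := by
  simp only [elemSeries, map_prod, map_sub, map_one, map_mul, PowerSeries.map_C,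
    PowerSeries.map_X, AlgHom.toRingHom_eq_coe, RingHom.coe_coe, sA_succ_Tv_succ]
  exact prod_range_swap (fun j => 1 - PowerSeries.C (Tv (j + 1)) * PowerSeries.X) h

lemma eprod_natCast (m : ℕ) : eprod m = ∏ j ∈ range m, -Tv (j + 1) := by
  rw [eprod, Int.toNat_natCast]

lemma sA_succ_eprod (k : ℕ) {i m : ℕ} (h : i + 1 ≠ m) : sA k (i + 1) (eprod m) = eprod m := by
  simp only [eprod_natCast, map_prod, map_neg, sA_succ_Tv_succ]
  exact prod_range_swap (fun j => -Tv (j + 1)) h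

lemma elemSeries_succ (n : ℕ) :
    elemSeries (n + 1) = elemSeries n * (1 - PowerSeries.C (Tv (n + 1)) * PowerSeries.X) :=
  prod_range_succ _ _

lemma prod_range_add_two {M : Type*} [CommMonoid M] (f : ℕ → M) (m : ℕ) :
    ∏ j ∈ range (m + 2), f j = f 0 * f 1 * ∏ j ∈ range m, f (j + 2) := by
  simp only [prod_range_succ', zero_add, add_assoc, one_add_one_eq_two]
  ac_rfl

lemma elemSeries_add_two (m : ℕ) :
    elemSeries (m + 2) = (1 - PowerSeries.C (Tv 1) * PowerSeries.X) *
      (1 - PowerSeries.C (Tv 2) * PowerSeries.X) *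
      ∏ j ∈ range m, (1 - PowerSeries.C (Tv (j + 3)) * PowerSeries.X) := by
  simp only [elemSeries, prod_range_add_two, add_assoc]

lemma map_sA_zero_elemSeries_add_two (k m : ℕ) :
    PowerSeries.map (sA k 0).toRingHom (elemSeries (m + 2)) =
      (1 + PowerSeries.C (Tv 1) * PowerSeries.X) * (1 + PowerSeries.C (Tv 2) * PowerSeries.X) *
      ∏ j ∈ range m, (1 - PowerSeries.C (Tv (j + 3)) * PowerSeries.X) := by
  simp only [elemSeries_add_two, map_prod, map_sub, map_one, map_mul, PowerSeries.map_C,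
    PowerSeries.map_X, AlgHom.toRingHom_eq_coe, RingHom.coe_coe, sA_zero_Tv_one, sA_zero_Tv_two,
    sA_zero_Tv_add_three, map_neg]
  ring

lemma map_sA_zero_cSeries_mul_elemSeries (k m : ℕ) :
    PowerSeries.map (sA k 0).toRingHom (cSeries * elemSeries (m + 2)) =
      cSeries * elemSeries (m + 2) := by
  rw [map_mul, map_sA_zero_elemSeries_add_two, elemSeries_add_two]
  linear_combination (∏ j ∈ range m, (1 - PowerSeries.C (Tv (j + 3)) * PowerSeries.X)) *
    map_sA_zero_cSeries_mul k

lemma sA_zero_eprod (k m : ℕ) : sA k 0 (eprod (m + 2 : ℕ)) = eprod (m + 2 : ℕ) := by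
  simp only [eprod_natCast, prod_range_add_two, add_assoc, map_mul, map_prod, map_neg,
    zero_add, one_add_one_eq_two, sA_zero_Tv_one, sA_zero_Tv_two, sA_zero_Tv_add_three]
  ring

lemma sA_zero_two_fk_sub_Cv (k : ℕ) : sA k 0 (2 * fk - Cv k) = 2 * fk - Cv k := by
  rw [map_sub, map_mul, map_ofNat, sA_zero_fk, sA_zero_Cv]
  ring

lemma dden_ne_zero (i : ℕ) : dden i ≠ 0 := by
  rcases i with _ | i
  · intro h
    simpa [dden, Tv] using congrArg (eval fun _ => (1 : ℚ)) h
  · exact sub_ne_zero.mpr fun h => by simpa [Tv] using X_injective h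

lemma dd_eq_of_sub_eq_mul {k i : ℕ} {f g : R2} (h : f - sA k i f = dden i * g) :
    dd k i f = toK g := by
  have hden : toK (dden i) ≠ 0 := by simpa [toK] using dden_ne_zero i
  rw [dd, ← map_sub, h, map_mul, mul_div_cancel_left₀ _ hden]

lemma dd_eq_zero_of_sA_eq {k i : ℕ} {f : R2} (h : sA k i f = f) : dd k i f = 0 := by
  rw [dd, h, sub_self, zero_div]

lemma coeff_succ_mul_one_sub (P : PowerSeries R2) (a : R2) (q : ℕ) :
    PowerSeries.coeff (q + 1) (P * (1 - PowerSeries.C a * PowerSeries.X)) =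
      PowerSeries.coeff (q + 1) P - a * PowerSeries.coeff q P := by
  rw [mul_sub, mul_one, map_sub, mul_left_comm, PowerSeries.coeff_C_mul,
    PowerSeries.coeff_succ_mul_X]

lemma chat_neg_eq_coeff (k : ℕ) {n : ℕ} (hn : 0 < n) :
    chat k (-n) (k + n) =
      PowerSeries.coeff (k + n) (cSeries * elemSeries n) + (2 * fk - Cv k) * eprod n := by
  rw [chat, if_pos ⟨by ring, by omega⟩, add_sub_cancel_left, ← Nat.cast_add, cc_natCast,
    mk_hmt_neg]

lemma map_sA_succ_cSeries_mul_elemSeries (k : ℕ) {i m : ℕ} (h : i + 1 ≠ m) :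
    PowerSeries.map (sA k (i + 1)).toRingHom (cSeries * elemSeries m) = cSeries * elemSeries m := by
  rw [map_mul, map_sA_succ_cSeries, map_sA_succ_elemSeries k h]

lemma sA_succ_two_fk_sub_Cv (k i : ℕ) : sA k (i + 1) (2 * fk - Cv k) = 2 * fk - Cv k := by
  rw [map_sub, map_mul, map_ofNat, sA_succ_fk, sA_succ_Cv]

lemma sA_succ_chat_of_ne (k : ℕ) {i n : ℕ} (h : i + 1 ≠ n) (hn : 0 < n) :
    sA k (i + 1) (chat k (-n) (k + n)) = chat k (-n) (k + n) := by
  rw [chat_neg_eq_coeff k hn, map_add, sA_coeff, map_sA_succ_cSeries_mul_elemSeries k h,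
    map_mul (sA k (i + 1)), sA_succ_two_fk_sub_Cv, sA_succ_eprod k h]

lemma map_sA_succ_cSeries_mul_elemSeries_self (k n : ℕ) :
    PowerSeries.map (sA k (n + 1)).toRingHom (cSeries * elemSeries (n + 1)) =
      cSeries * elemSeries n * (1 - PowerSeries.C (Tv (n + 2)) * PowerSeries.X) := by
  rw [elemSeries_succ, ← mul_assoc, map_mul, map_sA_succ_cSeries_mul_elemSeries k n.succ_ne_self,
    map_sub, map_one, map_mul, PowerSeries.map_C, PowerSeries.map_X, AlgHom.toRingHom_eq_coe,
    RingHom.coe_coe, sA_succ_Tv_succ, Equiv.swap_apply_left]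

lemma chat_sub_sA_succ_self (k n : ℕ) :
    chat k (-(n + 1 : ℕ)) (k + (n + 1 : ℕ)) -
        sA k (n + 1) (chat k (-(n + 1 : ℕ)) (k + (n + 1 : ℕ))) =
      dden (n + 1) *
        (PowerSeries.coeff (k + n) (cSeries * elemSeries n) + (2 * fk - Cv k) * eprod n) := by
  have hP : eprod (n + 1 : ℕ) = eprod n * -Tv (n + 1) := by
    simp only [eprod_natCast, prod_range_succ]
  rw [chat_neg_eq_coeff k n.succ_pos, map_add, sA_coeff, map_sA_succ_cSeries_mul_elemSeries_self,
    map_mul (sA k (n + 1)), sA_succ_two_fk_sub_Cv, hP, map_mul (sA k (n + 1)),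
    sA_succ_eprod k n.succ_ne_self, map_neg, sA_succ_Tv_succ, Equiv.swap_apply_left,
    elemSeries_succ, ← mul_assoc, show k + n.succ = k + n + 1 from rfl, coeff_succ_mul_one_sub,
    coeff_succ_mul_one_sub, dden, if_neg n.succ_ne_zero]
  ring

lemma sA_zero_chat (k m : ℕ) :
    sA k 0 (chat k (-(m + 2 : ℕ)) (k + (m + 2 : ℕ))) =
      chat k (-(m + 2 : ℕ)) (k + (m + 2 : ℕ)) := by
  rw [chat_neg_eq_coeff k (by omega), map_add, sA_coeff, map_sA_zero_cSeries_mul_elemSeries,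
    map_mul (sA k 0), sA_zero_two_fk_sub_Cv, sA_zero_eprod]

lemma cSeries_mul_elemSeries_one_sub_map_sA_zero (k : ℕ) :
    cSeries * elemSeries 1 - PowerSeries.map (sA k 0).toRingHom (cSeries * elemSeries 1) =
      PowerSeries.C (2 * (Tv 1 + Tv 2)) * PowerSeries.X * (cSeries * PowerSeries.mk (hmt 1)) -
        PowerSeries.C (Tv 1 + Tv 2) * PowerSeries.X * cSeries := by
  rw [elemSeries, prod_range_one, map_mul, map_sub, map_one, map_mul, PowerSeries.map_C,
    PowerSeries.map_X, AlgHom.toRingHom_eq_coe, RingHom.coe_coe, zero_add, sA_zero_Tv_one,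
    ← AlgHom.toRingHom_eq_coe, map_sA_zero_cSeries, mk_hmt_two, mk_hmt_one]
  simp only [map_mul, map_ofNat, map_add, map_neg]
  linear_combination (2 * (PowerSeries.C (Tv 1) + PowerSeries.C (Tv 2)) * PowerSeries.X *
    cSeries * geomSeries (Tv 1)) * one_add_mul_geomSeries (Tv 2)

lemma ftils_one (k : ℕ) : ftils k 1 = cc 1 k - fk := by
  have h0 : hmt 1 0 = 1 := by simp [hmt, negT, hfun]
  rw [ftils, fks, cc, Int.toNat_natCast, sum_range_eq_add_Ico _ k.succ_pos, Nat.succ_eq_add_one,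
    Ico_add_one_right_eq_Icc, h0, Nat.cast_zero, sub_zero]
  ring

lemma chat_sub_sA_zero_chat (k : ℕ) :
    chat k (-1) (k + 1) - sA k 0 (chat k (-1) (k + 1)) = dden 0 * (2 * ftils k 1) := by
  have h := chat_neg_eq_coeff k one_pos
  have hP : eprod 1 = -Tv 1 := by simp [eprod]
  rw [Nat.cast_one] at h
  rw [h, map_add, sA_coeff, map_mul (sA k 0), sA_zero_two_fk_sub_Cv, hP, map_neg, sA_zero_Tv_one,
    add_sub_add_comm, ← map_sub, cSeries_mul_elemSeries_one_sub_map_sA_zero, map_sub, mul_assoc,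
    mul_assoc, PowerSeries.coeff_C_mul, PowerSeries.coeff_C_mul, PowerSeries.coeff_succ_X_mul,
    PowerSeries.coeff_succ_X_mul, ← cc_natCast, cSeries, PowerSeries.coeff_mk, ftils_one, dden,
    if_pos rfl]
  ring

theorem statement9_general (k : ℕ) (p : ℤ) (hp : (k : ℤ) < p) :
    (∀ i : ℕ, 1 ≤ i →
      (2 ≤ i → (i : ℤ) = p - k →
        dd k i (chat k ((k : ℤ) - p) p) = toK (chat k ((k : ℤ) - p + 1) (p - 1))) ∧
      (i = 1 → (i : ℤ) = p - k → dd k i (chat k ((k : ℤ) - p) p) = toK (2 * fk)) ∧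
      ((i : ℤ) ≠ p - k → dd k i (chat k ((k : ℤ) - p) p) = 0)) ∧
    ((k : ℤ) - p = -1 → dd k 0 (chat k ((k : ℤ) - p) p) = toK (2 * ftils k 1)) ∧
    ((k : ℤ) - p < -1 → dd k 0 (chat k ((k : ℤ) - p) p) = 0) ∧
    dd k 0 (chat k (-1) ((k : ℤ) + 1)) = toK (2 * ftils k 1) ∧
    dd k 1 (chat k (-1) ((k : ℤ) + 1)) = toK (2 * fk) ∧
    dd k 0 (chat k (-1) ((k : ℤ) + 1)) + dd k 1 (chat k (-1) ((k : ℤ) + 1)) =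
      toK (2 * cc 1 k) := by
  obtain ⟨n, rfl⟩ : ∃ n : ℕ, p = k + (n + 1 : ℕ) := ⟨(p - k - 1).toNat, by omega⟩
  have hdd : dd k (n + 1) (chat k (-(n + 1 : ℕ)) (k + (n + 1 : ℕ))) =
      toK (PowerSeries.coeff (k + n) (cSeries * elemSeries n) + (2 * fk - Cv k) * eprod n) :=
    dd_eq_of_sub_eq_mul (chat_sub_sA_succ_self k n)
  have h0 : dd k 0 (chat k (-1) (k + 1)) = toK (2 * ftils k 1) :=
    dd_eq_of_sub_eq_mul (chat_sub_sA_zero_chat k)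
  have h1 : dd k 1 (chat k (-1) (k + 1)) = toK (2 * fk) := by
    simpa [elemSeries, eprod, cSeries] using dd_eq_of_sub_eq_mul (chat_sub_sA_succ_self k 0)
  rw [show (k : ℤ) - (k + (n + 1 : ℕ)) = -(n + 1 : ℕ) by ring]
  refine ⟨fun i hi => ⟨fun hi2 hin => ?_, fun hi1 hin => ?_, fun hin => ?_⟩, fun hn => ?_,
    fun hn => ?_, h0, h1, ?_⟩
  · obtain rfl : i = n + 1 := by omega
    rw [hdd, show -((n + 1 : ℕ) : ℤ) + 1 = -n by push_cast; ring,
      show (k : ℤ) + (n + 1 : ℕ) - 1 = k + n by push_cast; ring, chat_neg_eq_coeff k (by omega)]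
  · obtain ⟨rfl, rfl⟩ : i = 1 ∧ n = 0 := by omega
    simpa using h1
  · obtain ⟨j, rfl⟩ : ∃ j, i = j + 1 := ⟨i - 1, by omega⟩
    exact dd_eq_zero_of_sA_eq (sA_succ_chat_of_ne k (by omega) n.succ_pos)
  · obtain rfl : n = 0 := by omega
    simpa using h0
  · obtain ⟨m, rfl⟩ : ∃ m, n = m + 1 := ⟨n - 1, by omega⟩
    exact dd_eq_zero_of_sA_eq (sA_zero_chat k m)
  · rw [h0, h1, ← map_add, ftils_one]
    congr 1
    ring

theorem statement9 (k : ℕ) (hk : 1 ≤ k) (p : ℤ) (hp : (k : ℤ) < p) :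
    (∀ i : ℕ, 1 ≤ i →
      (2 ≤ i → (i : ℤ) = p - k →
        dd k i (chat k ((k : ℤ) - p) p) = toK (chat k ((k : ℤ) - p + 1) (p - 1))) ∧
      (i = 1 → (i : ℤ) = p - k → dd k i (chat k ((k : ℤ) - p) p) = toK (2 * fk)) ∧
      ((i : ℤ) ≠ p - k → dd k i (chat k ((k : ℤ) - p) p) = 0)) ∧
    ((k : ℤ) - p = -1 → dd k 0 (chat k ((k : ℤ) - p) p) = toK (2 * ftils k 1)) ∧
    ((k : ℤ) - p < -1 → dd k 0 (chat k ((k : ℤ) - p) p) = 0) ∧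
    dd k 0 (chat k (-1) ((k : ℤ) + 1)) = toK (2 * ftils k 1) ∧
    dd k 1 (chat k (-1) ((k : ℤ) + 1)) = toK (2 * fk) ∧
    dd k 0 (chat k (-1) ((k : ℤ) + 1)) + dd k 1 (chat k (-1) ((k : ℤ) + 1)) =
      toK (2 * cc 1 k) :=
  statement9_general k p hp
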